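/- Let (Ω, F, μ) be a probability space and let U, W, ε_M, ε_T, ε_Y be square-integrable real random variables, each with mean 0 and variance 1, such that Cov(U, W) = ρ and all other pairs among {U, W, ε_M, ε_T, ε_Y} have covariance 0. Let a, b, c, d, ρ be real numbers with a² ≤ 1, d² ≤ 1, b² + c² + 2bcρ ≤ 1, a ≠ 0, d ≠ 0, ρ ≠ 0, and 1 − (ab + acρ)² ≠ 0. Define M := b·U + c·W + √(1−b²−c²−2bcρ)·ε_M, T := a·U + √(1−a²)·ε_T, and Y := d·W + √(1−d²)·ε_Y. Then the ratio of the adjusted to the unadjusted bias satisfies β_T / Cov(T,Y) = (ρ·(1−b²−c²−bcρ) − bc) / (ρ·(1 − (ab + acρ)²)); in particular this ratio does not depend on d. -/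

import Mathlib

/-!
Writing `s, t, u` for the three square roots, bilinearity of the covariance and the
covariance table of the exogenous variables give `Var T = a² + t² = 1`,
`Var M = b² + c² + 2bcρ + s² = 1`, `Cov(T,Y) = adρ`, `Cov(M,T) = a(b + cρ)` and
`Cov(Y,M) = d(bρ + c)`. Hence `β_T = d(aρ - a(b + cρ)(bρ + c)) / (1 - a²(b + cρ)²)`,
and dividing by `adρ` cancels both `a` and `d`.
-/

open MeasureTheory ProbabilityTheory

/-- Covariance of two real random variables: `Cov(X,Y) = E[XY] - E[X] E[Y]`. -/
noncomputable def covar {Ω : Type*} [MeasurableSpace Ω] (μ : Measure Ω) (X Y : Ω → ℝ) : ℝ :=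
  (∫ ω, X ω * Y ω ∂μ) - (∫ ω, X ω ∂μ) * (∫ ω, Y ω ∂μ)

/-- The population OLS coefficient on `T` when regressing `Y` on `(T, M)`. -/
noncomputable def betaT {Ω : Type*} [MeasurableSpace Ω] (μ : Measure Ω) (Y T M : Ω → ℝ) : ℝ :=
  (covar μ Y T * variance M μ - covar μ Y M * covar μ M T) /
    (variance T μ * variance M μ - (covar μ M T) ^ 2)

section Covar

variable {Ω : Type*} [MeasurableSpace Ω] {μ : Measure Ω}

theorem covar_comm (X Y : Ω → ℝ) : covar μ X Y = covar μ Y X := by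
  simp only [covar, mul_comm]

theorem covar_const_mul_left (c : ℝ) (X Y : Ω → ℝ) :
    covar μ (fun ω => c * X ω) Y = c * covar μ X Y := by
  simp only [covar, mul_assoc, integral_const_mul]
  ring

variable [IsProbabilityMeasure μ] {X X₁ X₂ X₃ Y Y₁ Y₂ ε : Ω → ℝ}

theorem covar_eq_covariance (hX : MemLp X 2 μ) (hY : MemLp Y 2 μ) :
    covar μ X Y = cov[X, Y; μ] := by
  rw [covariance_eq_sub hX hY]
  rfl

theorem covar_self (hX : MemLp X 2 μ) : covar μ X X = variance X μ := by
  rw [covar_eq_covariance hX hX, covariance_self hX.aemeasurable]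

theorem covar_lincomb_left (h₁ : MemLp X₁ 2 μ) (h₂ : MemLp X₂ 2 μ) (hY : MemLp Y 2 μ)
    (c₁ c₂ : ℝ) :
    covar μ (fun ω => c₁ * X₁ ω + c₂ * X₂ ω) Y = c₁ * covar μ X₁ Y + c₂ * covar μ X₂ Y := by
  rw [covar_eq_covariance (X := fun ω => c₁ * X₁ ω + c₂ * X₂ ω)
      ((h₁.const_mul c₁).add (h₂.const_mul c₂)) hY,
    covar_eq_covariance h₁ hY, covar_eq_covariance h₂ hY, ← covariance_const_mul_left,
    ← covariance_const_mul_left]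
  exact covariance_add_left (h₁.const_mul c₁) (h₂.const_mul c₂) hY

theorem covar_lincomb_right (hX : MemLp X 2 μ) (h₁ : MemLp Y₁ 2 μ) (h₂ : MemLp Y₂ 2 μ)
    (c₁ c₂ : ℝ) :
    covar μ X (fun ω => c₁ * Y₁ ω + c₂ * Y₂ ω) = c₁ * covar μ X Y₁ + c₂ * covar μ X Y₂ := by
  rw [covar_comm, covar_lincomb_left h₁ h₂ hX, covar_comm Y₁, covar_comm Y₂]

theorem covar_lincomb₃_left (h₁ : MemLp X₁ 2 μ) (h₂ : MemLp X₂ 2 μ) (h₃ : MemLp X₃ 2 μ)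
    (hY : MemLp Y 2 μ) (c₁ c₂ c₃ : ℝ) :
    covar μ (fun ω => c₁ * X₁ ω + c₂ * X₂ ω + c₃ * X₃ ω) Y
      = c₁ * covar μ X₁ Y + c₂ * covar μ X₂ Y + c₃ * covar μ X₃ Y := by
  have h₁₂ : MemLp (fun ω => c₁ * X₁ ω + c₂ * X₂ ω) 2 μ :=
    (h₁.const_mul c₁).add (h₂.const_mul c₂)
  have := covar_lincomb_left h₁₂ h₃ hY 1 c₃
  simp only [one_mul] at this
  rw [this, covar_lincomb_left h₁ h₂ hY]

theorem variance_lincomb (h₁ : MemLp X₁ 2 μ) (h₂ : MemLp X₂ 2 μ) (c₁ c₂ : ℝ) :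
    variance (fun ω => c₁ * X₁ ω + c₂ * X₂ ω) μ
      = c₁ ^ 2 * variance X₁ μ + 2 * c₁ * c₂ * covar μ X₁ X₂ + c₂ ^ 2 * variance X₂ μ := by
  rw [variance_fun_add (h₁.const_mul c₁) (h₂.const_mul c₂), variance_const_mul,
    variance_const_mul, covariance_const_mul_left, covariance_const_mul_right,
    covar_eq_covariance h₁ h₂]
  ring

theorem variance_add_mul_eq_one (hX : MemLp X 2 μ) (hε : MemLp ε 2 μ)
    (hεv : variance ε μ = 1) (hXε : covar μ X ε = 0) {s : ℝ}
    (hs : variance X μ + s ^ 2 = 1) :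
    variance (fun ω => X ω + s * ε ω) μ = 1 := by
  rw [variance_fun_add hX (hε.const_mul s), covariance_const_mul_right,
    ← covar_eq_covariance hX hε, hXε, variance_const_mul, hεv]
  linear_combination hs

end Covar

theorem stmt4_general {Ω : Type*} [MeasurableSpace Ω] (μ : Measure Ω) [IsProbabilityMeasure μ]
    (U W εM εT εY : Ω → ℝ)
    (hU2 : MemLp U 2 μ) (hW2 : MemLp W 2 μ) (hεM2 : MemLp εM 2 μ)
    (hεT2 : MemLp εT 2 μ) (hεY2 : MemLp εY 2 μ)
    (hUv : variance U μ = 1) (hWv : variance W μ = 1) (hεMv : variance εM μ = 1)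
    (hεTv : variance εT μ = 1)
    (a b c d ρ : ℝ)
    (hUW : covar μ U W = ρ)
    (hUεM : covar μ U εM = 0) (hUεT : covar μ U εT = 0) (hUεY : covar μ U εY = 0)
    (hWεM : covar μ W εM = 0) (hWεT : covar μ W εT = 0) (hWεY : covar μ W εY = 0)
    (hεMεT : covar μ εM εT = 0) (hεMεY : covar μ εM εY = 0) (hεTεY : covar μ εT εY = 0)
    (ha : a ^ 2 ≤ 1) (hbc : b ^ 2 + c ^ 2 + 2 * b * c * ρ ≤ 1)
    (ha0 : a ≠ 0) (hd0 : d ≠ 0) (hρ0 : ρ ≠ 0)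
    (M T Y : Ω → ℝ)
    (hM : M = fun ω => b * U ω + c * W ω + Real.sqrt (1 - b ^ 2 - c ^ 2 - 2 * b * c * ρ) * εM ω)
    (hT : T = fun ω => a * U ω + Real.sqrt (1 - a ^ 2) * εT ω)
    (hY : Y = fun ω => d * W ω + Real.sqrt (1 - d ^ 2) * εY ω) :
    betaT μ Y T M / covar μ T Y =
      (ρ * (1 - b ^ 2 - c ^ 2 - b * c * ρ) - b * c) /
        (ρ * (1 - (a * b + a * c * ρ) ^ 2)) := by
  have hT2 : MemLp T 2 μ := hT ▸ (hU2.const_mul a).add (hεT2.const_mul _)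
  have hY2 : MemLp Y 2 μ := hY ▸ (hW2.const_mul d).add (hεY2.const_mul _)
  have hvT : variance T μ = 1 := by
    rw [hT]
    refine variance_add_mul_eq_one (hU2.const_mul a) hεT2 hεTv ?_ ?_
    · rw [covar_const_mul_left, hUεT, mul_zero]
    · rw [variance_const_mul, hUv, Real.sq_sqrt (by linarith)]
      ring
  have hvM : variance M μ = 1 := by
    rw [hM]
    refine variance_add_mul_eq_one (X := fun ω => b * U ω + c * W ω)
      ((hU2.const_mul b).add (hW2.const_mul c)) hεM2 hεMv ?_ ?_
    · rw [covar_lincomb_left hU2 hW2 hεM2, hUεM, hWεM]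
      ring
    · rw [variance_lincomb hU2 hW2, hUv, hWv, hUW, Real.sq_sqrt (by linarith)]
      ring
  have hTY : covar μ T Y = a * d * ρ := by
    rw [hT, covar_lincomb_left hU2 hεT2 hY2, hY, covar_lincomb_right hU2 hW2 hεY2,
      covar_lincomb_right hεT2 hW2 hεY2, hUW, hUεY, covar_comm εT W, hWεT, hεTεY]
    ring
  have hMT : covar μ M T = a * b + a * c * ρ := by
    rw [hM, covar_lincomb₃_left hU2 hW2 hεM2 hT2, hT, covar_lincomb_right hU2 hU2 hεT2,
      covar_lincomb_right hW2 hU2 hεT2, covar_lincomb_right hεM2 hU2 hεT2, covar_self hU2,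
      hUv, hUεT, covar_comm W U, hUW, hWεT, covar_comm εM U, hUεM, hεMεT]
    ring
  have hYM : covar μ Y M = d * (b * ρ + c) := by
    rw [covar_comm, hM, covar_lincomb₃_left hU2 hW2 hεM2 hY2, hY,
      covar_lincomb_right hU2 hW2 hεY2, covar_lincomb_right hW2 hW2 hεY2,
      covar_lincomb_right hεM2 hW2 hεY2, covar_self hW2, hWv, hUW, hUεY, hWεY,
      covar_comm εM W, hWεM, hεMεY]
    ring
  rw [betaT, hvT, hvM, covar_comm Y T, hTY, hMT, hYM]
  field_simp
  ring

/-- The ratio of the adjusted to the unadjusted bias in the M-structure with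
correlated latent causes; the ratio does not depend on `d`. -/
theorem stmt4 {Ω : Type*} [MeasurableSpace Ω] (μ : Measure Ω) [IsProbabilityMeasure μ]
    (U W εM εT εY : Ω → ℝ)
    (hU2 : MemLp U 2 μ) (hW2 : MemLp W 2 μ) (hεM2 : MemLp εM 2 μ)
    (hεT2 : MemLp εT 2 μ) (hεY2 : MemLp εY 2 μ)
    (hUm : ∫ ω, U ω ∂μ = 0) (hWm : ∫ ω, W ω ∂μ = 0) (hεMm : ∫ ω, εM ω ∂μ = 0)
    (hεTm : ∫ ω, εT ω ∂μ = 0) (hεYm : ∫ ω, εY ω ∂μ = 0)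
    (hUv : variance U μ = 1) (hWv : variance W μ = 1) (hεMv : variance εM μ = 1)
    (hεTv : variance εT μ = 1) (hεYv : variance εY μ = 1)
    (a b c d ρ : ℝ)
    (hUW : covar μ U W = ρ)
    (hUεM : covar μ U εM = 0) (hUεT : covar μ U εT = 0) (hUεY : covar μ U εY = 0)
    (hWεM : covar μ W εM = 0) (hWεT : covar μ W εT = 0) (hWεY : covar μ W εY = 0)
    (hεMεT : covar μ εM εT = 0) (hεMεY : covar μ εM εY = 0) (hεTεY : covar μ εT εY = 0)
    (ha : a ^ 2 ≤ 1) (hd : d ^ 2 ≤ 1) (hbc : b ^ 2 + c ^ 2 + 2 * b * c * ρ ≤ 1)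
    (ha0 : a ≠ 0) (hd0 : d ≠ 0) (hρ0 : ρ ≠ 0)
    (hne : 1 - (a * b + a * c * ρ) ^ 2 ≠ 0)
    (M T Y : Ω → ℝ)
    (hM : M = fun ω => b * U ω + c * W ω + Real.sqrt (1 - b ^ 2 - c ^ 2 - 2 * b * c * ρ) * εM ω)
    (hT : T = fun ω => a * U ω + Real.sqrt (1 - a ^ 2) * εT ω)
    (hY : Y = fun ω => d * W ω + Real.sqrt (1 - d ^ 2) * εY ω) :
    betaT μ Y T M / covar μ T Y =
      (ρ * (1 - b ^ 2 - c ^ 2 - b * c * ρ) - b * c) /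
        (ρ * (1 - (a * b + a * c * ρ) ^ 2)) :=
  stmt4_general μ U W εM εT εY hU2 hW2 hεM2 hεT2 hεY2 hUv hWv hεMv hεTv a b c d ρ hUW hUεM hUεT hUεY
    hWεM hWεT hWεY hεMεT hεMεY hεTεY ha hbc ha0 hd0 hρ0 M T Y hM hT hY
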